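/- arXiv:2003.11122 — 2 statements merged into one kernel-verified Lean document; each statement's English description precedes it below -/
import Mathlib

section
/- Let W ≥ 0 be a random variable with E[e^{−uW}] = π(uI − T)^{-1}t for u ≥ 0 (a phase-type distribution), and let S_α be an independent nonnegative random variable with E[e^{−uS_α}] = exp(−u^α) for some 0 < α ≤ 1. Then the product X = W^{1/α} S_α satisfies E[e^{−uX}] = π(u^α I − T)^{-1} t for u ≥ 0. -/
open Matrix MeasureTheory ProbabilityTheory

/-- Product representation: if `W ≥ 0` has phase-type Laplace transform
`π(uI − T)⁻¹ t` and `S_α ≥ 0` is independent with Laplace transform `exp(−u^α)`,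
then `X = W^{1/α} S_α` has Laplace transform `π(u^α I − T)⁻¹ t`. -/
theorem product_representation (Ω : Type*) [MeasurableSpace Ω] (P : Measure Ω)
    [IsProbabilityMeasure P] (W S : Ω → ℝ) (hWmeas : Measurable W) (hSmeas : Measurable S)
    (hindep : IndepFun W S P) (hWpos : ∀ ω, 0 ≤ W ω) (hSpos : ∀ ω, 0 ≤ S ω)
    (α : ℝ) (hα : 0 < α) (hα1 : α ≤ 1)
    (p : ℕ) (π : Fin p → ℝ) (T : Matrix (Fin p) (Fin p) ℝ)
    (hW : ∀ u : ℝ, 0 ≤ u →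
      ∫ ω, Real.exp (-u * W ω) ∂P =
        π ⬝ᵥ ((u • (1 : Matrix (Fin p) (Fin p) ℝ) - T)⁻¹.mulVec (-(T.mulVec fun _ => 1))))
    (hS : ∀ u : ℝ, 0 ≤ u → ∫ ω, Real.exp (-u * S ω) ∂P = Real.exp (-(u ^ α))) :
    ∀ u : ℝ, 0 ≤ u →
      ∫ ω, Real.exp (-u * (W ω ^ (1 / α) * S ω)) ∂P =
        π ⬝ᵥ (((u ^ α) • (1 : Matrix (Fin p) (Fin p) ℝ) - T)⁻¹.mulVec
          (-(T.mulVec fun _ => 1))) := by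
  intro u hu
  have huα : (0:ℝ) ≤ u ^ α := Real.rpow_nonneg hu α
  rw [← hW _ huα]
  set μ := P.map W with hμ
  set ν := P.map S with hν
  have hWS : P.map (fun ω => (W ω, S ω)) = μ.prod ν :=
    (indepFun_iff_map_prod_eq_prod_map_map hWmeas.aemeasurable hSmeas.aemeasurable).mp hindep
  have hFmeas : Measurable fun q : ℝ × ℝ => Real.exp (-u * (q.1 ^ (1/α) * q.2)) := by
    fun_prop
  -- a.e. nonnegativity on the pushforwards
  have hμae : ∀ᵐ x ∂μ, 0 ≤ x := by
    rw [hμ, ae_map_iff hWmeas.aemeasurable measurableSet_Ici]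
    filter_upwards with ω using hWpos ω
  have hνae : ∀ᵐ x ∂ν, 0 ≤ x := by
    rw [hν, ae_map_iff hSmeas.aemeasurable measurableSet_Ici]
    filter_upwards with ω using hSpos ω
  have hprodae : ∀ᵐ q ∂(μ.prod ν), 0 ≤ q.1 ∧ 0 ≤ q.2 := by
    rw [Measure.ae_prod_iff_ae_ae (by
      exact (measurableSet_le measurable_const measurable_fst).inter
        (measurableSet_le measurable_const measurable_snd))]
    filter_upwards [hμae] with x hx
    filter_upwards [hνae] with y hy
    exact ⟨hx, hy⟩
  have hμprob : IsProbabilityMeasure μ := Measure.isProbabilityMeasure_map hWmeas.aemeasurable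
  have hνprob : IsProbabilityMeasure ν := Measure.isProbabilityMeasure_map hSmeas.aemeasurable
  have hint : Integrable (fun q : ℝ × ℝ => Real.exp (-u * (q.1 ^ (1/α) * q.2))) (μ.prod ν) := by
    apply Integrable.mono' (integrable_const (1:ℝ)) hFmeas.aestronglyMeasurable
    filter_upwards [hprodae] with q hq
    rw [Real.norm_eq_abs, abs_of_pos (Real.exp_pos _)]
    apply Real.exp_le_one_iff.mpr
    have : 0 ≤ q.1 ^ (1/α) * q.2 := mul_nonneg (Real.rpow_nonneg hq.1 _) hq.2
    nlinarith
  have step1 : ∫ ω, Real.exp (-u * (W ω ^ (1 / α) * S ω)) ∂P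
      = ∫ q : ℝ × ℝ, Real.exp (-u * (q.1 ^ (1/α) * q.2)) ∂(μ.prod ν) := by
    rw [← hWS, integral_map (hWmeas.prodMk hSmeas).aemeasurable hFmeas.aestronglyMeasurable]
  rw [step1, integral_prod _ hint]
  have step2 : ∫ x, (∫ y, Real.exp (-u * (x ^ (1/α) * y)) ∂ν) ∂μ
      = ∫ x, Real.exp (-(u ^ α) * x) ∂μ := by
    apply integral_congr_ae
    filter_upwards [hμae] with x hx
    have hv : (0:ℝ) ≤ u * x ^ (1/α) := mul_nonneg hu (Real.rpow_nonneg hx _)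
    have hinner : ∫ y, Real.exp (-u * (x ^ (1/α) * y)) ∂ν
        = ∫ ω, Real.exp (-(u * x ^ (1/α)) * S ω) ∂P := by
      have h1 : ∫ y, Real.exp (-u * (x ^ (1/α) * y)) ∂ν
          = ∫ y, Real.exp (-(u * x ^ (1/α)) * y) ∂ν := by
        congr 1; ext y; ring_nf
      rw [h1, hν]
      exact integral_map hSmeas.aemeasurable
        ((show Measurable fun y : ℝ => Real.exp (-(u * x ^ (1/α)) * y) by fun_prop).aestronglyMeasurable)
    rw [hinner, hS _ hv]
    have hxx : (x ^ (1/α)) ^ α = x := by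
      rw [← Real.rpow_mul hx, one_div, inv_mul_cancel₀ hα.ne', Real.rpow_one]
    rw [Real.mul_rpow hu (Real.rpow_nonneg hx _), hxx]
    ring
  rw [step2, hμ]
  exact integral_map hWmeas.aemeasurable
    ((show Measurable fun x : ℝ => Real.exp (-(u ^ α) * x) by fun_prop).aestronglyMeasurable)
end

section
/- Scaling of rows of a sub-intensity matrix corresponds to rewards: if T is an invertible p × p matrix, r ∈ ℝᵖ with all rᵢ > 0, and S = Δ(r^{−α}) T, then for all u ≥ 0, π(Δ(u r)^α − T)^{-1}(−T e) = π(u^α I − S)^{-1}(−S e). -/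
open Matrix

/-- Row scaling corresponds to rewards: with `S = Δ(r^{−α}) T` for strictly positive `r`,
`π(Δ(ur)^α − T)⁻¹(−Te) = π(u^α I − S)⁻¹(−Se)` whenever the inverses exist. -/
theorem reward_row_scaling (p : ℕ) (π : Fin p → ℝ)
    (T : Matrix (Fin p) (Fin p) ℝ) (hT : IsUnit T.det)
    (r : Fin p → ℝ) (hr : ∀ i, 0 < r i) (α : ℝ) (hα : 0 < α) (hα1 : α ≤ 1) :
    ∀ u : ℝ, 0 ≤ u →
      IsUnit (Matrix.diagonal (fun i => (u * r i) ^ α) - T).det →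
      π ⬝ᵥ ((Matrix.diagonal (fun i => (u * r i) ^ α) - T)⁻¹.mulVec
          (-(T.mulVec fun _ => 1)))
        = π ⬝ᵥ (((u ^ α) • (1 : Matrix (Fin p) (Fin p) ℝ)
              - Matrix.diagonal (fun i => r i ^ (-α)) * T)⁻¹.mulVec
            (-((Matrix.diagonal (fun i => r i ^ (-α)) * T).mulVec fun _ => 1))) := by
  intro u hu hdet
  set D : Matrix (Fin p) (Fin p) ℝ := Matrix.diagonal (fun i => r i ^ α) with hD
  set Dinv : Matrix (Fin p) (Fin p) ℝ := Matrix.diagonal (fun i => r i ^ (-α)) with hDinv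
  have key : ∀ i, r i ^ α * r i ^ (-α) = 1 := fun i => by
    rw [← Real.rpow_add (hr i)]; simp
  have hDDinv : D * Dinv = 1 := by
    rw [hD, hDinv, Matrix.diagonal_mul_diagonal]
    simp only [key, Matrix.diagonal_one]
  set B : Matrix (Fin p) (Fin p) ℝ :=
    (u ^ α) • (1 : Matrix (Fin p) (Fin p) ℝ) - Dinv * T with hB
  have hfact : Matrix.diagonal (fun i => (u * r i) ^ α) - T = D * B := by
    rw [hB, Matrix.mul_sub, Matrix.mul_smul, Matrix.mul_one, ← Matrix.mul_assoc,
      hDDinv, Matrix.one_mul]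
    congr 1
    ext i j
    rcases eq_or_ne i j with h | h
    · subst h; simp [hD, Real.mul_rpow hu (hr i).le]
    · simp [hD, Matrix.diagonal_apply_ne _ h]
  rw [hfact] at hdet ⊢
  have hdetB : IsUnit B.det := by
    rw [Matrix.det_mul] at hdet
    exact (IsUnit.mul_iff.mp hdet).2
  have hDinveq : D⁻¹ = Dinv := Matrix.inv_eq_right_inv hDDinv
  rw [Matrix.mul_inv_rev, hDinveq, ← Matrix.mulVec_mulVec, Matrix.mulVec_neg,
    Matrix.mulVec_mulVec]
end
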